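/- arXiv:2012.15794 — 7 statements merged into one kernel-verified Lean document; each statement's English description precedes it below -/
import Mathlib

section
/- Let (P_ℓ), (Q_ℓ) and (c_ℓ) be sequences in a commutative ring, and let ⟨n⟩_ℓ be the doubly indexed sequence with ⟨0⟩_ℓ = 0, ⟨1⟩_ℓ = 1 and ⟨n⟩_ℓ = P_ℓ·⟨n-1⟩_{ℓ+1} + Q_ℓ·⟨n-2⟩_{ℓ+2} for n ≥ 2. Define P̃_ℓ = c_ℓ P_ℓ, Q̃_ℓ = c_ℓ c_{ℓ+1} Q_ℓ, and let ⟨ñ⟩_ℓ be the sequence satisfying the same recursion with P̃, Q̃ and initial values 0 and 1. Then for all n ≥ 2 and ℓ ≥ 0, ⟨ñ⟩_ℓ = c_ℓ c_{ℓ+1} ⋯ c_{ℓ+n-2} · ⟨n⟩_ℓ (and the formula ⟨1̃⟩_ℓ = ⟨1⟩_ℓ, ⟨0̃⟩_ℓ = ⟨0⟩_ℓ holds trivially). -/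
/-- Scaling of a level-dependent Lucas system. -/
theorem scaled_level_lucas {R : Type*} [CommRing R]
    (P Q c : ℕ → R) (A B : ℕ → ℕ → R)
    (hA0 : ∀ ℓ, A 0 ℓ = 0) (hA1 : ∀ ℓ, A 1 ℓ = 1)
    (hArec : ∀ n ℓ, A (n + 2) ℓ = P ℓ * A (n + 1) (ℓ + 1) + Q ℓ * A n (ℓ + 2))
    (hB0 : ∀ ℓ, B 0 ℓ = 0) (hB1 : ∀ ℓ, B 1 ℓ = 1)
    (hBrec : ∀ n ℓ, B (n + 2) ℓ =
      (c ℓ * P ℓ) * B (n + 1) (ℓ + 1) + (c ℓ * c (ℓ + 1) * Q ℓ) * B n (ℓ + 2)) :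
    ∀ n ℓ : ℕ, 2 ≤ n →
      B n ℓ = (∏ i ∈ Finset.range (n - 1), c (ℓ + i)) * A n ℓ := by
  have key : ∀ n ℓ : ℕ, B n ℓ = (∏ i ∈ Finset.range (n - 1), c (ℓ + i)) * A n ℓ := by
    intro n
    induction n using Nat.twoStepInduction with
    | zero => intro ℓ; simp [hA0, hB0]
    | one => intro ℓ; simp [hA1, hB1]
    | more n ih1 ih2 =>
      intro ℓ
      rw [hBrec, hArec]
      match n with
      | 0 => simp [hA0, hA1, hB0, hB1]
      | Nat.succ m =>
        rw [ih2 (ℓ + 1), ih1 (ℓ + 2)]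
        simp only [Nat.succ_sub_one, Nat.add_sub_cancel]
        have h1 : (∏ i ∈ Finset.range (m + 2), c (ℓ + i))
            = c ℓ * ∏ i ∈ Finset.range (m + 1), c (ℓ + 1 + i) := by
          rw [Finset.prod_range_succ']
          simp [add_assoc, add_comm, add_left_comm, mul_comm]
        have h2 : (∏ i ∈ Finset.range (m + 2), c (ℓ + i))
            = c ℓ * c (ℓ + 1) * ∏ i ∈ Finset.range m, c (ℓ + 2 + i) := by
          rw [Finset.prod_range_succ', Finset.prod_range_succ']
          simp [add_assoc, add_comm, add_left_comm, mul_comm, mul_assoc, mul_left_comm]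
        simp only [Nat.succ_eq_add_one]
        linear_combination (- P ℓ * A (m + 1 + 1) (ℓ + 1)) * h1 - Q ℓ * A (m + 1) (ℓ + 2) * h2
  intro n ℓ _
  exact key n ℓ
end

section
/- Let F_n be the abstract Fibonacci polynomials extended to all integers n in the algebra ℂ⟨x, x^{-1}, y⟩ (where x is invertible), via F_0 = 1, F_1 = y, and F_{n+2} = F_n x + F_{n+1} y for all n ∈ ℤ. Then for all integers n ≥ 0, F_{-n}(x, y) = (-1)^n · F_{n-2}(x^{-1}, x^{-1}y) · x^{-1}, where F_{n-2}(x^{-1}, x^{-1}y) denotes the abstract Fibonacci polynomial with the substitutions x ↦ x^{-1} and y ↦ x^{-1}y (and F_{-1} := 0, F_{-2} := x^{-1} on the right when n-2 < 0). -/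
/-- Negatively indexed abstract Fibonacci polynomials expressed through
the non-negatively indexed ones: F_{-n}(x,y) = (-1)^n F_{n-2}(x⁻¹, x⁻¹y) x⁻¹.
`F` is the Fibonacci sequence for the pair (x,y), and `G` is the Fibonacci
sequence for the pair (x⁻¹, x⁻¹y), both extended to all integers. -/
theorem fib_negative_index {R : Type*} [Ring R] [Algebra ℂ R]
    (x xi y : R) (hx : x * xi = 1) (hx' : xi * x = 1)
    (F G : ℤ → R)
    (hF0 : F 0 = 1) (hF1 : F 1 = y)
    (hFrec : ∀ n : ℤ, F (n + 2) = F n * x + F (n + 1) * y)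
    (hG0 : G 0 = 1) (hG1 : G 1 = xi * y)
    (hGrec : ∀ n : ℤ, G (n + 2) = G n * xi + G (n + 1) * (xi * y)) :
    ∀ n : ℕ, F (-(n : ℤ)) = (-1 : R) ^ n * G ((n : ℤ) - 2) * xi := by
  have hGm1xi : G (-1) * xi = 0 := by
    have h := hGrec (-1)
    norm_num at h
    rw [hG1, hG0, one_mul] at h
    have h2 : G (-1) * xi + xi * y = 0 + xi * y := by rw [zero_add]; exact h.symm
    exact add_right_cancel h2
  have hGm1 : G (-1) = 0 := by
    calc G (-1) = G (-1) * xi * x := by rw [mul_assoc, hx', mul_one]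
    _ = 0 := by rw [hGm1xi, zero_mul]
  have hGm2 : G (-2) = x := by
    have h := hGrec (-2)
    norm_num at h
    rw [hG0, hGm1, zero_mul, add_zero] at h
    calc G (-2) = G (-2) * xi * x := by rw [mul_assoc, hx', mul_one]
    _ = x := by rw [← h, one_mul]
  have hFm1 : F (-1) = 0 := by
    have h := hFrec (-1)
    norm_num at h
    rw [hF1, hF0, one_mul] at h
    have hx0 : F (-1) * x = 0 := by
      have h2 : F (-1) * x + y = 0 + y := by rw [zero_add]; exact h.symm
      exact add_right_cancel h2
    calc F (-1) = F (-1) * x * xi := by rw [mul_assoc, hx, mul_one]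
    _ = 0 := by rw [hx0, zero_mul]
  intro n
  induction n using Nat.twoStepInduction with
  | zero =>
    norm_num
    rw [hF0, hGm2, hx]
  | one =>
    norm_num
    rw [hFm1, hGm1, zero_mul, neg_zero]
  | more n ih1 ih2 =>
    have key : F (-(n : ℤ)) = F (-((n : ℤ) + 2)) * x + F (-((n : ℤ) + 1)) * y := by
      have h := hFrec (-(n : ℤ) - 2)
      have e1 : -(n : ℤ) - 2 + 2 = -(n : ℤ) := by ring
      have e2 : -(n : ℤ) - 2 + 1 = -((n : ℤ) + 1) := by ring
      have e3 : -(n : ℤ) - 2 = -((n : ℤ) + 2) := by ring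
      rw [e1, e2, e3] at h
      exact h
    have hFval : F (-((n : ℤ) + 2)) = (F (-(n : ℤ)) - F (-((n : ℤ) + 1)) * y) * xi := by
      rw [key]
      rw [add_sub_cancel_right, mul_assoc, hx, mul_one]
    have hGn : G (n : ℤ) = G ((n : ℤ) - 2) * xi + G ((n : ℤ) - 1) * (xi * y) := by
      have h := hGrec ((n : ℤ) - 2)
      have e1 : (n : ℤ) - 2 + 2 = (n : ℤ) := by ring
      have e2 : (n : ℤ) - 2 + 1 = (n : ℤ) - 1 := by ring
      rw [e1, e2] at h
      exact h
    have ecast : -((n + 2 : ℕ) : ℤ) = -((n : ℤ) + 2) := by push_cast; ring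
    have ecast2 : ((n + 2 : ℕ) : ℤ) - 2 = (n : ℤ) := by push_cast; ring
    have ecast3 : -((n + 1 : ℕ) : ℤ) = -((n : ℤ) + 1) := by push_cast; ring
    have ecast4 : ((n + 1 : ℕ) : ℤ) - 2 = (n : ℤ) - 1 := by push_cast; ring
    rw [ecast, ecast2, hFval, ih1]
    rw [ecast3, ecast4] at ih2
    rw [ih2, hGn]
    rw [pow_succ, pow_succ]
    noncomm_ring
end

section
/- Let F_n be the abstract Fibonacci polynomials in ℂ⟨x, x^{-1}, y⟩ extended to all integer indices. Then the noncommutative Cassini identity holds for all integers n: (-1)^n = F_{n-2}(x^{-1}, x^{-1}y) · x^{-1} · F_n(x,y) - F_{n-1}(x^{-1}, x^{-1}y) · F_{n-1}(x,y). -/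
/-!
Besides its defining right-handed recurrence `F (n + 2) = F n * x + F (n + 1) * y`, the sequence
`F` satisfies the left-handed one `F (n + 2) = x * F n + y * F (n + 1)`: the difference of the two
sides is again a solution of the right-handed recurrence and vanishes at two consecutive indices,
hence everywhere since `x` is invertible. Expanding `F` by the left-handed recurrence and `G` by
its right-handed one, the Cassini expression `G (n - 2) * x⁻¹ * F n - G (n - 1) * F (n - 1)`
changes sign from one index to the next, the cross terms cancelling through `x⁻¹ * x = 1`.
At `n = 0` it equals `G (-2) * x⁻¹ = x * x⁻¹ = 1`.
-/

section

variable {R : Type*} [Ring R]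

def IsFibRec (a b : R) (F : ℤ → R) : Prop :=
  ∀ n, F (n + 2) = F n * a + F (n + 1) * b

namespace IsFibRec

variable {a a' b : R} {F : ℤ → R}

theorem eq_zero (hF : IsFibRec a b F) (ha : a * a' = 1) {m : ℤ} (hm : F m = 0)
    (hm1 : F (m + 1) = 0) (n : ℤ) : F n = 0 := by
  suffices F n = 0 ∧ F (n + 1) = 0 from this.1
  refine Int.inductionOn' n m ⟨hm, hm1⟩ (fun k _ ⟨hk, hk1⟩ => ⟨hk1, ?_⟩)
    (fun k _ ⟨hk, hk1⟩ => ⟨?_, by rwa [sub_add_cancel]⟩)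
  · rw [add_assoc, one_add_one_eq_two, hF, hk, hk1, zero_mul, zero_mul, add_zero]
  · have h := hF (k - 1)
    rw [show k - 1 + 2 = k + 1 by ring, sub_add_cancel, hk, hk1, zero_mul, add_zero] at h
    exact isRightRegular_of_mul_eq_one ha (show F (k - 1) * a = 0 * a by rw [← h, zero_mul])

theorem apply_neg_one (hF : IsFibRec a b F) (ha : a * a' = 1) (h0 : F 0 = 1) (h1 : F 1 = b) :
    F (-1) = 0 := by
  have h := hF (-1)
  norm_num [h0, h1] at h
  exact isRightRegular_of_mul_eq_one ha (show F (-1) * a = 0 * a by rw [h, zero_mul])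

theorem apply_neg_two (hF : IsFibRec a b F) (ha : a * a' = 1) (h0 : F 0 = 1) (h1 : F 1 = b) :
    F (-2) = a' := by
  have h := hF (-2)
  norm_num [h0, hF.apply_neg_one ha h0 h1] at h
  rw [← one_mul a', h, mul_assoc, ha, mul_one]

theorem apply_add_two_left (hF : IsFibRec a b F) (ha : a * a' = 1) (h0 : F 0 = 1)
    (h1 : F 1 = b) (n : ℤ) : F (n + 2) = a * F n + b * F (n + 1) := by
  set D : ℤ → R := fun n => F (n + 2) - a * F n - b * F (n + 1) with hD
  have hDrec : IsFibRec a b D := by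
    intro n
    have e2 := hF n
    have e3 := hF (n + 1)
    have e4 := hF (n + 2)
    norm_num [add_assoc] at e3 e4
    simp only [hD]
    norm_num [add_assoc]
    -- both sides become noncommutative polynomials in `F n`, `F (n + 1)`, `a`, `b`
    rw [e4, e3, e2]
    noncomm_ring
  have hDm : D (-1) = 0 := by
    norm_num [hD, hF.apply_neg_one ha h0 h1, h0, h1]
  have hDm1 : D (-1 + 1) = 0 := by
    have e := hF 0
    norm_num [h0, h1] at e
    norm_num [hD, e, h0, h1]
  have hDn : F (n + 2) - (a * F n + b * F (n + 1)) = 0 := by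
    rw [← sub_sub]
    exact hDrec.eq_zero ha hDm hDm1 n
  exact sub_eq_zero.mp hDn

end IsFibRec

def cassini (a' : R) (F G : ℤ → R) (n : ℤ) : R :=
  G (n - 2) * a' * F n - G (n - 1) * F (n - 1)

theorem cassini_add_one {a a' b : R} {F G : ℤ → R}
    (hF : ∀ n, F (n + 2) = a * F n + b * F (n + 1)) (hG : IsFibRec a' (a' * b) G)
    (h : a' * a = 1) (n : ℤ) : cassini a' F G (n + 1) = -cassini a' F G n := by
  have hFn := hF (n - 1)
  have hGn := hG (n - 2)
  rw [show n - 1 + 2 = n + 1 by ring, sub_add_cancel] at hFn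
  rw [show n - 2 + 2 = n by ring, show n - 2 + 1 = n - 1 by ring] at hGn
  simp only [cassini]
  rw [show n + 1 - 2 = n - 1 by ring, add_sub_cancel_right, hFn, hGn]
  calc G (n - 1) * a' * (a * F (n - 1) + b * F n) - (G (n - 2) * a' + G (n - 1) * (a' * b)) * F n
      = G (n - 1) * (a' * a) * F (n - 1) - G (n - 2) * a' * F n := by noncomm_ring
    _ = -(G (n - 2) * a' * F n - G (n - 1) * F (n - 1)) := by rw [h, mul_one]; abel

theorem units_neg_one_zpow_eq_of_add_one_eq_neg {f : ℤ → R} (h0 : f 0 = 1)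
    (hf : ∀ n, f (n + 1) = -f n) (n : ℤ) : (((-1) ^ n : ℤˣ) : R) = f n := by
  refine Int.inductionOn' n 0 (by simp [h0]) (fun k _ ih => ?_) (fun k _ ih => ?_)
  · rw [hf, ← ih, zpow_add_one]
    simp
  · rw [← neg_neg (f (k - 1)), ← hf, sub_add_cancel, ← ih, zpow_sub_one]
    simp

end

theorem noncommutative_cassini_general {R : Type*} [Ring R]
    (x xi y : R) (hx : x * xi = 1) (hx' : xi * x = 1)
    (F G : ℤ → R)
    (hF0 : F 0 = 1) (hF1 : F 1 = y)
    (hFrec : ∀ n : ℤ, F (n + 2) = F n * x + F (n + 1) * y)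
    (hG0 : G 0 = 1) (hG1 : G 1 = xi * y)
    (hGrec : ∀ n : ℤ, G (n + 2) = G n * xi + G (n + 1) * (xi * y)) :
    ∀ n : ℤ, (((-1) ^ n : ℤˣ) : R) = G (n - 2) * xi * F n - G (n - 1) * F (n - 1) := by
  have hG : IsFibRec xi (xi * y) G := hGrec
  have hFleft := IsFibRec.apply_add_two_left hFrec hx hF0 hF1
  have hC0 : cassini xi F G 0 = 1 := by
    simp [cassini, hG.apply_neg_two hx' hG0 hG1, hG.apply_neg_one hx' hG0 hG1, hF0, hx]
  exact units_neg_one_zpow_eq_of_add_one_eq_neg hC0 (cassini_add_one hFleft hG hx')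

/-- The noncommutative Cassini identity:
(-1)^n = F_{n-2}(x⁻¹,x⁻¹y)·x⁻¹·F_n(x,y) - F_{n-1}(x⁻¹,x⁻¹y)·F_{n-1}(x,y),
for all integers n. -/
theorem noncommutative_cassini {R : Type*} [Ring R] [Algebra ℂ R]
    (x xi y : R) (hx : x * xi = 1) (hx' : xi * x = 1)
    (F G : ℤ → R)
    (hF0 : F 0 = 1) (hF1 : F 1 = y)
    (hFrec : ∀ n : ℤ, F (n + 2) = F n * x + F (n + 1) * y)
    (hG0 : G 0 = 1) (hG1 : G 1 = xi * y)
    (hGrec : ∀ n : ℤ, G (n + 2) = G n * xi + G (n + 1) * (xi * y)) :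
    ∀ n : ℤ, (((-1) ^ n : ℤˣ) : R) = G (n - 2) * xi * F n - G (n - 1) * F (n - 1) :=
  noncommutative_cassini_general x xi y hx hx' F G hF0 hF1 hFrec hG0 hG1 hGrec
end

section
/- Let F_n be the abstract Fibonacci polynomials in ℂ⟨x, x^{-1}, y⟩ extended to all integer indices. Then the noncommutative Euler–Cassini identity holds for all integers n and k: (-1)^n · F_k(x,y) = F_{n-2}(x^{-1}, x^{-1}y) · x^{-1} · F_{n+k}(x,y) - F_{n-1}(x^{-1}, x^{-1}y) · F_{n+k-1}(x,y). -/
/-!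
Writing `F` for the right-recursive sequence in `x, y` and `G` for the one in `x⁻¹, x⁻¹ y`, the
key observation is that `F` also satisfies the left recursion `F (n + 2) = x F n + y F (n + 1)`:
the defect `F (n + 2) - x F n - y F (n + 1)` satisfies the right recursion and vanishes at
`n = 0, 1`, and since `x` is invertible the recursion runs both ways. Multiplying the left
recursion by `x⁻¹` gives `x⁻¹ F (m + 1) = F (m - 1) + x⁻¹ y F m`, which together with the
recursion for `G` shows that the right-hand side of the identity changes sign when `n` grows
by one. At `n = 0` it equals `F k` because `G (-1) = 0` and `G (-2) x⁻¹ = 1`.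
-/

section

variable {R : Type*} [Ring R]

theorem eq_zero_of_rightRec {a a' b : R} (ha : a * a' = 1) {D : ℤ → R}
    (hrec : ∀ n, D (n + 2) = D n * a + D (n + 1) * b) (h0 : D 0 = 0) (h1 : D 1 = 0) (n : ℤ) :
    D n = 0 := by
  suffices h : D n = 0 ∧ D (n + 1) = 0 from h.1
  induction n using Int.induction_on with
  | zero => exact ⟨h0, by simpa using h1⟩
  | succ n ih =>
    refine ⟨ih.2, ?_⟩
    rw [add_assoc, one_add_one_eq_two, hrec, ih.1, ih.2]
    simp
  | pred n ih =>
    refine ⟨?_, by simpa using ih.1⟩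
    have h := hrec (-n - 1)
    rw [show -(n : ℤ) - 1 + 2 = -n + 1 by ring, show -(n : ℤ) - 1 + 1 = -n by ring, ih.1, ih.2,
      zero_mul, add_zero] at h
    rw [← mul_one (D _), ← ha, ← mul_assoc, ← h, zero_mul]

theorem leftRec_of_rightRec {a a' b : R} (ha : a * a' = 1) {F : ℤ → R} (h0 : F 0 = 1)
    (h1 : F 1 = b) (hrec : ∀ n, F (n + 2) = F n * a + F (n + 1) * b) (n : ℤ) :
    F (n + 2) = a * F n + b * F (n + 1) := by
  set D : ℤ → R := fun n ↦ F (n + 2) - a * F n - b * F (n + 1) with hD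
  have hDrec : ∀ n, D (n + 2) = D n * a + D (n + 1) * b := by
    intro n
    have e₀ := hrec n
    have e₁ := hrec (n + 1)
    have e₂ := hrec (n + 2)
    simp only [hD, show n + 2 + 2 = n + 4 by ring, show n + 2 + 1 = n + 3 by ring,
      show n + 1 + 2 = n + 3 by ring, show n + 1 + 1 = n + 2 by ring] at e₁ e₂ ⊢
    rw [e₂, e₁, e₀]
    noncomm_ring
  have hF2 : F 2 = a + b * b := by simpa [h0, h1] using hrec 0
  have hF3 : F 3 = b * a + (a + b * b) * b := by
    simpa [h1, hF2, show (1 : ℤ) + 2 = 3 by norm_num, one_add_one_eq_two] using hrec 1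
  have hD0 : D 0 = 0 := by simp only [hD, zero_add, hF2, h0, h1]; noncomm_ring
  have hD1 : D 1 = 0 := by
    simp only [hD, show (1 : ℤ) + 2 = 3 by norm_num, one_add_one_eq_two, hF3, hF2, h1]
    noncomm_ring
  rw [← sub_eq_zero, ← sub_sub]
  exact eq_zero_of_rightRec ha hDrec hD0 hD1 n

theorem rightRec_neg_one_eq_zero {u v c : R} (hu : u * v = 1) {G : ℤ → R} (h0 : G 0 = 1)
    (h1 : G 1 = c) (hrec : ∀ n, G (n + 2) = G n * u + G (n + 1) * c) :
    G (-1) = 0 := by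
  have h : G (-1) * u = 0 := by simpa [h0, h1] using hrec (-1)
  rw [← mul_one (G _), ← hu, ← mul_assoc, h, zero_mul]

theorem rightRec_neg_two_mul {u v c : R} (hu : u * v = 1) {G : ℤ → R} (h0 : G 0 = 1)
    (h1 : G 1 = c) (hrec : ∀ n, G (n + 2) = G n * u + G (n + 1) * c) :
    G (-2) * u = 1 := by
  have h := hrec (-2)
  rwa [show (-2 : ℤ) + 1 = -1 by norm_num, rightRec_neg_one_eq_zero hu h0 h1 hrec, zero_mul,
    add_zero, show (-2 : ℤ) + 2 = 0 by norm_num, h0, eq_comm] at h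

theorem eq_neg_one_zpow_mul_of_succ_eq_neg {c : ℤ → R}
    (h : ∀ n, c (n + 1) = -c n) (n : ℤ) :
    c n = (((-1) ^ n : ℤˣ) : R) * c 0 := by
  have hsign : ∀ m : ℤ, (((-1) ^ (m + 1) : ℤˣ) : R) = -(((-1) ^ m : ℤˣ) : R) := fun m ↦ by
    rw [zpow_add_one]
    push_cast
    rw [mul_neg_one]
  induction n using Int.induction_on with
  | zero => simp
  | succ n ih => rw [h, ih, hsign, neg_mul]
  | pred n ih =>
    have hn := h (-n - 1)
    have hs := hsign (-n - 1)
    rw [sub_add_cancel] at hn hs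
    rw [ih, hs, neg_mul, neg_inj] at hn
    exact hn.symm

theorem cassini_succ {a a' b : R} (ha : a' * a = 1) {F G : ℤ → R}
    (hF : ∀ n, F (n + 2) = a * F n + b * F (n + 1))
    (hG : ∀ n, G (n + 2) = G n * a' + G (n + 1) * (a' * b)) (n m : ℤ) :
    G (n - 1) * a' * F (m + 1) - G n * F m = -(G (n - 2) * a' * F m - G (n - 1) * F (m - 1)) := by
  have hF' : a' * F (m + 1) = F (m - 1) + a' * b * F m := by
    have h := hF (m - 1)
    rw [show m - 1 + 2 = m + 1 by ring, sub_add_cancel] at h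
    rw [h, mul_add, ← mul_assoc, ha, one_mul, mul_assoc]
  have hG' : G n = G (n - 2) * a' + G (n - 1) * (a' * b) := by
    simpa [show n - 2 + 1 = n - 1 by ring] using hG (n - 2)
  rw [mul_assoc, hF', hG']
  noncomm_ring

end

theorem noncommutative_euler_cassini_general {R : Type*} [Ring R]
    (x xi y : R) (hx : x * xi = 1) (hx' : xi * x = 1)
    (F G : ℤ → R)
    (hF0 : F 0 = 1) (hF1 : F 1 = y)
    (hFrec : ∀ n : ℤ, F (n + 2) = F n * x + F (n + 1) * y)
    (hG0 : G 0 = 1) (hG1 : G 1 = xi * y)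
    (hGrec : ∀ n : ℤ, G (n + 2) = G n * xi + G (n + 1) * (xi * y)) :
    ∀ n k : ℤ, (((-1) ^ n : ℤˣ) : R) * F k
      = G (n - 2) * xi * F (n + k) - G (n - 1) * F (n + k - 1) := by
  intro n k
  have hFleft := leftRec_of_rightRec hx hF0 hF1 hFrec
  have hsucc : ∀ n, G (n + 1 - 2) * xi * F (n + 1 + k) - G (n + 1 - 1) * F (n + 1 + k - 1)
      = -(G (n - 2) * xi * F (n + k) - G (n - 1) * F (n + k - 1)) := by
    intro n
    simpa [add_right_comm n 1 k, show n + 1 - 2 = n - 1 by ring] using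
      cassini_succ hx' hFleft hGrec n (n + k)
  have hzero : G (0 - 2) * xi * F (0 + k) - G (0 - 1) * F (0 + k - 1) = F k := by
    rw [zero_add, zero_sub, zero_sub, rightRec_neg_two_mul hx' hG0 hG1 hGrec,
      rightRec_neg_one_eq_zero hx' hG0 hG1 hGrec, one_mul, zero_mul, sub_zero]
  rw [← hzero]
  exact (eq_neg_one_zpow_mul_of_succ_eq_neg
    (c := fun n ↦ G (n - 2) * xi * F (n + k) - G (n - 1) * F (n + k - 1)) hsucc n).symm

/-- The noncommutative Euler–Cassini identity:
(-1)^n F_k(x,y) = F_{n-2}(x⁻¹,x⁻¹y)·x⁻¹·F_{n+k}(x,y)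
                  - F_{n-1}(x⁻¹,x⁻¹y)·F_{n+k-1}(x,y),
for all integers n and k. -/
theorem noncommutative_euler_cassini {R : Type*} [Ring R] [Algebra ℂ R]
    (x xi y : R) (hx : x * xi = 1) (hx' : xi * x = 1)
    (F G : ℤ → R)
    (hF0 : F 0 = 1) (hF1 : F 1 = y)
    (hFrec : ∀ n : ℤ, F (n + 2) = F n * x + F (n + 1) * y)
    (hG0 : G 0 = 1) (hG1 : G 1 = xi * y)
    (hGrec : ∀ n : ℤ, G (n + 2) = G n * xi + G (n + 1) * (xi * y)) :
    ∀ n k : ℤ, (((-1) ^ n : ℤˣ) : R) * F k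
      = G (n - 2) * xi * F (n + k) - G (n - 1) * F (n + k - 1) :=
  noncommutative_euler_cassini_general x xi y hx hx' F G hF0 hF1 hFrec hG0 hG1 hGrec
end

section
/- In the algebra ℂ_w[x,y] with relations y x = w(1,1) x y, x·w(s,t) = w(s+1,t)·x, y·w(s,t) = w(s,t+1)·y, define the weight-dependent binomial coefficients [n choose k]_w by [0 choose 0]_w = 1, [n choose k]_w = 0 for k < 0 or k > n, and [n+1 choose k]_w = [n choose k]_w + [n choose k-1]_w · W(k, n+1-k), where W(s,t) = ∏_{j=1}^t w(s,j). Then for all n ≥ 0: (x+y)^n = ∑_{k=0}^n [n choose k]_w · x^k y^{n-k}. -/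
/-- The big (column) weight W(s,t) = w(s,1)⋯w(s,t). -/
def bigW {R : Type*} [Ring R] (w : ℕ → ℕ → R) (s t : ℕ) : R :=
  ((List.range t).map (fun j => w s (j + 1))).prod

/-- Weight-dependent binomial coefficients:
[0,0] = 1, [n,k] = 0 for k > n, and
[n+1,k] = [n,k] + [n,k-1]·W(k, n+1-k). -/
def wBin {R : Type*} [Ring R] (w : ℕ → ℕ → R) : ℕ → ℕ → R
  | 0, 0 => 1
  | 0, _ + 1 => 0
  | n + 1, 0 => wBin w n 0
  | n + 1, k + 1 => wBin w n (k + 1) + wBin w n k * bigW w (k + 1) (n - k)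

section aux
variable {R : Type*} [Ring R] (w : ℕ → ℕ → R)

lemma bigW_succ (s t : ℕ) : bigW w s (t + 1) = bigW w s t * w s (t + 1) := by
  simp [bigW, List.range_succ]

lemma wBin_zero_of_lt : ∀ n k, n < k → wBin w n k = 0 := by
  intro n
  induction n with
  | zero => intro k hk; match k, hk with | k + 1, _ => rfl
  | succ n ih =>
    intro k hk
    match k, hk with
    | k + 1, hk =>
      show wBin w n (k + 1) + wBin w n k * bigW w (k + 1) (n - k) = 0
      rw [ih (k+1) (by omega), ih k (by omega), zero_mul, add_zero]

variable (x y : R)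
  (hww : ∀ s t s' t', w s t * w s' t' = w s' t' * w s t)
  (hyx : y * x = w 1 1 * (x * y))
  (hxw : ∀ s t, 1 ≤ s → 1 ≤ t → x * w s t = w (s + 1) t * x)
  (hyw : ∀ s t, 1 ≤ s → 1 ≤ t → y * w s t = w s (t + 1) * y)

include hxw in
lemma x_bigW (s : ℕ) (hs : 1 ≤ s) : ∀ t, x * bigW w s t = bigW w (s + 1) t * x := by
  intro t
  induction t with
  | zero => simp [bigW]
  | succ t ih =>
    rw [bigW_succ, ← mul_assoc, ih, mul_assoc, hxw s (t+1) hs (by omega), ← mul_assoc,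
      ← bigW_succ]

include hxw in
lemma xpow_bigW (s t : ℕ) (hs : 1 ≤ s) : ∀ k, x ^ k * bigW w s t = bigW w (s + k) t * x ^ k := by
  intro k
  induction k with
  | zero => simp
  | succ k ih =>
    rw [pow_succ', mul_assoc, ih, ← mul_assoc, x_bigW w x hxw (s + k) (by omega), mul_assoc,
      ← pow_succ']
    have : s + k + 1 = s + (k + 1) := by omega
    rw [this]

include hww in
lemma w_comm_prod (a b : ℕ) (l : List R) (hl : ∀ r ∈ l, ∃ p q, r = w p q) :
    w a b * l.prod = l.prod * w a b := by
  refine (Commute.list_prod_right _ _ ?_).eq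
  intro r hr
  obtain ⟨p, q, rfl⟩ := hl r hr
  exact (hww a b p q)

include hww hyw in
lemma y_bigW1 : ∀ t, y * bigW w 1 t =
    ((List.range t).map (fun j => w 1 (j + 2))).prod * y := by
  intro t
  induction t with
  | zero => simp [bigW]
  | succ t ih =>
    rw [bigW_succ, ← mul_assoc, ih, mul_assoc, hyw 1 (t+1) le_rfl (by omega), ← mul_assoc]
    simp [List.range_succ]

include hww hyx hyw in
lemma ypow_x : ∀ t, y ^ t * x = bigW w 1 t * (x * y ^ t) := by
  intro t
  induction t with
  | zero => simp [bigW]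
  | succ t ih =>
    have h1 : y ^ (t + 1) * x = y * (y ^ t * x) := by rw [pow_succ', mul_assoc]
    rw [h1, ih, ← mul_assoc, y_bigW1 w y hww hyw, mul_assoc, ← mul_assoc y, hyx,
      ← mul_assoc, ← mul_assoc]
    have h2 : x * y * y ^ t = x * y ^ (t + 1) := by rw [mul_assoc, ← pow_succ']
    rw [mul_assoc _ _ (y ^ t), h2]
    congr 1
    have h3 : bigW w 1 (t + 1) =
        w 1 1 * ((List.range t).map (fun j => w 1 (j + 2))).prod := by
      simp only [bigW, List.range_succ_eq_map, List.map_cons, List.prod_cons, List.map_map]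
      rfl
    rw [h3, w_comm_prod w hww 1 1 _ (by intro r hr; simp at hr; obtain ⟨j, _, rfl⟩ := hr; exact ⟨1, j+2, rfl⟩)]
end aux

/-- The noncommutative weight-dependent binomial theorem:
(x+y)^n = ∑_{k=0}^n [n,k]_w x^k y^{n-k} in ℂ_w[x,y]. -/
theorem weight_binomial_theorem {R : Type*} [Ring R] [Algebra ℂ R]
    (x y : R) (w : ℕ → ℕ → R)
    (hww : ∀ s t s' t', w s t * w s' t' = w s' t' * w s t)
    (hyx : y * x = w 1 1 * (x * y))
    (hxw : ∀ s t, 1 ≤ s → 1 ≤ t → x * w s t = w (s + 1) t * x)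
    (hyw : ∀ s t, 1 ≤ s → 1 ≤ t → y * w s t = w s (t + 1) * y) :
    ∀ n : ℕ, (x + y) ^ n = ∑ k ∈ Finset.range (n + 1), wBin w n k * (x ^ k * y ^ (n - k)) := by
  intro n
  induction n with
  | zero => simp [wBin]
  | succ n ih =>
    rw [pow_succ, ih, Finset.sum_mul]
    have hterm : ∀ k ∈ Finset.range (n + 1),
        wBin w n k * (x ^ k * y ^ (n - k)) * (x + y) =
        wBin w n k * (bigW w (k + 1) (n - k) * (x ^ (k + 1) * y ^ (n - k)))
          + wBin w n k * (x ^ k * y ^ (n + 1 - k)) := by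
      intro k hk
      simp only [Finset.mem_range] at hk
      rw [mul_add]
      congr 1
      · rw [mul_assoc, mul_assoc, ypow_x w x y hww hyx hyw, ← mul_assoc (x ^ k),
          xpow_bigW w x hxw 1 (n - k) le_rfl k, mul_assoc, ← mul_assoc (x ^ k), ← pow_succ]
        have : 1 + k = k + 1 := by omega
        rw [this]
      · rw [mul_assoc, mul_assoc, ← pow_succ]
        have : n - k + 1 = n + 1 - k := by omega
        rw [this]
    rw [Finset.sum_congr rfl hterm, Finset.sum_add_distrib]
    rw [Finset.sum_range_succ' (fun k => wBin w (n + 1) k * (x ^ k * y ^ (n + 1 - k))) (n + 1)]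
    have hrec : ∀ k, wBin w (n + 1) (k + 1) = wBin w n (k + 1) + wBin w n k * bigW w (k + 1) (n - k) := fun k => rfl
    have h0 : wBin w (n + 1) 0 = wBin w n 0 := rfl
    simp only [hrec, h0, add_mul]
    rw [Finset.sum_add_distrib]
    have e1 : ∀ k ∈ Finset.range (n + 1),
        wBin w n k * bigW w (k + 1) (n - k) * (x ^ (k + 1) * y ^ (n + 1 - (k + 1))) =
        wBin w n k * (bigW w (k + 1) (n - k) * (x ^ (k + 1) * y ^ (n - k))) := by
      intro k hk
      have : n + 1 - (k + 1) = n - k := by omega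
      rw [this, mul_assoc]
    rw [Finset.sum_congr rfl e1]
    have e2 : (∑ k ∈ Finset.range (n + 1), wBin w n (k + 1) * (x ^ (k + 1) * y ^ (n + 1 - (k + 1))))
        + wBin w n 0 * (x ^ 0 * y ^ (n + 1 - 0)) =
        ∑ k ∈ Finset.range (n + 1), wBin w n k * (x ^ k * y ^ (n + 1 - k)) := by
      rw [← Finset.sum_range_succ' (fun k => wBin w n k * (x ^ k * y ^ (n + 1 - k))) (n + 1),
        Finset.sum_range_succ, wBin_zero_of_lt w n (n + 1) (by omega), zero_mul, add_zero]
    rw [← e2]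
    abel
end

section
/- Let w(s,t) for s ∈ ℤ, t ∈ ℕ be invertible weights and define the dual weights w̃(s,t) = w(1-s-t, t)^{-1}. In the algebra ℂ_w[x, x^{-1}, y] (generated by x, x^{-1}, y with x^{-1}x = x x^{-1} = 1, yx = w(1,1)xy, x^{-1}y = w(0,1)y x^{-1}, x·w(s,t) = w(s+1,t)x, x^{-1}·w(s,t) = w(s-1,t)x^{-1}, y·w(s,t) = w(s,t+1)y), the elements X = x^{-1}, Y = x^{-1}y satisfy Y·X = w̃(1,1)·X·Y, X·w̃(s,t) = w̃(s+1,t)·X, and Y·w̃(s,t) = w̃(s,t+1)·Y; i.e., (X, Y) satisfy the weight-dependent commutation relations with respect to the dual weights w̃. -/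
/-- If `a * b = c * a`, `b` has right inverse `bi` and `c` has left inverse `ci`,
then `a * bi = ci * a`. -/
lemma swap_inv {R : Type*} [Ring R] (a b bi c ci : R)
    (hb : b * bi = 1) (hc : ci * c = 1) (h : a * b = c * a) :
    a * bi = ci * a := by
  calc a * bi = ci * c * (a * bi) := by rw [hc, one_mul]
    _ = ci * (c * a * bi) := by rw [mul_assoc, mul_assoc]
    _ = ci * (a * b * bi) := by rw [h]
    _ = ci * a := by rw [mul_assoc a, hb, mul_one]

/-- In ℂ_w[x,x⁻¹,y], the elements X = x⁻¹ and Y = x⁻¹y satisfy the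
weight-dependent commutation relations for the dual weights
w̃(s,t) = w(1-s-t,t)⁻¹. -/
theorem dual_weight_relations {R : Type*} [Ring R] [Algebra ℂ R]
    (x xi y : R) (w winv : ℤ → ℕ → R)
    (hx : x * xi = 1) (hx' : xi * x = 1)
    (hwinv : ∀ (s : ℤ) (t : ℕ), 1 ≤ t → w s t * winv s t = 1 ∧ winv s t * w s t = 1)
    (hww : ∀ (s s' : ℤ) (t t' : ℕ), w s t * w s' t' = w s' t' * w s t)
    (hyx : y * x = w 1 1 * (x * y))
    (hxiy : xi * y = w 0 1 * (y * xi))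
    (hxw : ∀ (s : ℤ) (t : ℕ), 1 ≤ t → x * w s t = w (s + 1) t * x)
    (hxiw : ∀ (s : ℤ) (t : ℕ), 1 ≤ t → xi * w s t = w (s - 1) t * xi)
    (hyw : ∀ (s : ℤ) (t : ℕ), 1 ≤ t → y * w s t = w s (t + 1) * y) :
    ((xi * y) * xi = winv (1 - 1 - 1) 1 * (xi * (xi * y))) ∧
    (∀ (s : ℤ) (t : ℕ), 1 ≤ t →
      xi * winv (1 - s - (t : ℤ)) t = winv (1 - (s + 1) - (t : ℤ)) t * xi) ∧
    (∀ (s : ℤ) (t : ℕ), 1 ≤ t →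
      (xi * y) * winv (1 - s - (t : ℤ)) t
        = winv (1 - s - ((t : ℤ) + 1)) (t + 1) * (xi * y)) := by
  -- xi commutes past winv
  have hxiwinv : ∀ (s : ℤ) (t : ℕ), 1 ≤ t →
      xi * winv s t = winv (s - 1) t * xi := fun s t ht =>
    swap_inv xi (w s t) (winv s t) (w (s - 1) t) (winv (s - 1) t)
      (hwinv s t ht).1 (hwinv (s - 1) t ht).2 (hxiw s t ht)
  -- y commutes past winv
  have hywinv : ∀ (s : ℤ) (t : ℕ), 1 ≤ t →
      y * winv s t = winv s (t + 1) * y := fun s t ht =>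
    swap_inv y (w s t) (winv s t) (w s (t + 1)) (winv s (t + 1))
      (hwinv s t ht).1 (hwinv s (t + 1) (le_trans ht (Nat.le_succ t))).2 (hyw s t ht)
  -- y * xi = winv 0 1 * (xi * y)
  have hyxi : y * xi = winv 0 1 * (xi * y) := by
    calc y * xi = winv 0 1 * (w 0 1 * (y * xi)) := by
          rw [← mul_assoc, (hwinv 0 1 le_rfl).2, one_mul]
      _ = winv 0 1 * (xi * y) := by rw [← hxiy]
  refine ⟨?_, ?_, ?_⟩
  · calc (xi * y) * xi = xi * (y * xi) := by rw [mul_assoc]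
      _ = xi * (winv 0 1 * (xi * y)) := by rw [hyxi]
      _ = (xi * winv 0 1) * (xi * y) := by rw [mul_assoc]
      _ = (winv (0 - 1) 1 * xi) * (xi * y) := by rw [hxiwinv 0 1 le_rfl]
      _ = winv (1 - 1 - 1) 1 * (xi * (xi * y)) := by norm_num [mul_assoc]
  · intro s t ht
    have := hxiwinv (1 - s - (t : ℤ)) t ht
    rwa [show (1 - s - (t : ℤ)) - 1 = 1 - (s + 1) - (t : ℤ) by ring] at this
  · intro s t ht
    calc (xi * y) * winv (1 - s - (t : ℤ)) t
        = xi * (y * winv (1 - s - (t : ℤ)) t) := by rw [mul_assoc]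
      _ = xi * (winv (1 - s - (t : ℤ)) (t + 1) * y) := by rw [hywinv _ _ ht]
      _ = (xi * winv (1 - s - (t : ℤ)) (t + 1)) * y := by rw [mul_assoc]
      _ = (winv (1 - s - (t : ℤ) - 1) (t + 1) * xi) * y := by
          rw [hxiwinv _ _ (le_trans ht (Nat.le_succ t))]
      _ = winv (1 - s - ((t : ℤ) + 1)) (t + 1) * (xi * y) := by
          rw [show (1 - s - (t : ℤ) - 1) = 1 - s - ((t : ℤ) + 1) by ring, mul_assoc]
end

section
/- Let F_n(x,y|w) be the noncommutative weight-dependent Fibonacci polynomials in ℂ_w[x,x^{-1},y], defined by F_0 = 1, F_1 = y, F_{n+2} = F_n·x + F_{n+1}·y for all n ∈ ℤ (extended to negative indices using the invertibility of x). Then for all n ≥ 0: F_{-n}(x,y|w) = (-1)^n · F_{n-2}(x^{-1}, x^{-1}y | w̃) · x^{-1}, where w̃(s,t) = w(1-s-t,t)^{-1} and F_m(X,Y|w̃) denotes the weight-dependent Fibonacci polynomial built from the generators X = x^{-1}, Y = x^{-1}y with weights w̃. -/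
/-- Negatively indexed noncommutative weight-dependent Fibonacci polynomials:
F_{-n}(x,y|w) = (-1)^n F_{n-2}(x⁻¹, x⁻¹y | w̃) x⁻¹ in ℂ_w[x,x⁻¹,y].
Here `F` is the Fibonacci sequence (extended to all integers) built from
(x, y), and `G` is the one built from (x⁻¹, x⁻¹y) (whose commutation
relations are governed by the dual weights w̃(s,t) = w(1-s-t,t)⁻¹). -/
theorem weight_fib_negative_index {R : Type*} [Ring R] [Algebra ℂ R]
    (x xi y : R) (w winv : ℤ → ℕ → R)
    (hx : x * xi = 1) (hx' : xi * x = 1)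
    (hwinv : ∀ (s : ℤ) (t : ℕ), 1 ≤ t → w s t * winv s t = 1 ∧ winv s t * w s t = 1)
    (hww : ∀ (s s' : ℤ) (t t' : ℕ), w s t * w s' t' = w s' t' * w s t)
    (hyx : y * x = w 1 1 * (x * y))
    (hxiy : xi * y = w 0 1 * (y * xi))
    (hxw : ∀ (s : ℤ) (t : ℕ), 1 ≤ t → x * w s t = w (s + 1) t * x)
    (hxiw : ∀ (s : ℤ) (t : ℕ), 1 ≤ t → xi * w s t = w (s - 1) t * xi)
    (hyw : ∀ (s : ℤ) (t : ℕ), 1 ≤ t → y * w s t = w s (t + 1) * y)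
    (F G : ℤ → R)
    (hF0 : F 0 = 1) (hF1 : F 1 = y)
    (hFrec : ∀ n : ℤ, F (n + 2) = F n * x + F (n + 1) * y)
    (hG0 : G 0 = 1) (hG1 : G 1 = xi * y)
    (hGrec : ∀ n : ℤ, G (n + 2) = G n * xi + G (n + 1) * (xi * y)) :
    ∀ n : ℕ, F (-(n : ℤ)) = (-1 : R) ^ n * G ((n : ℤ) - 2) * xi := by
  -- G at -1 vanishes
  have hGm1 : G (-1) = 0 := by
    have h := hGrec (-1)
    norm_num [hG0, hG1] at h
    have hz : G (-1) * xi = 0 := h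
    calc G (-1) = G (-1) * (xi * x) := by rw [hx', mul_one]
    _ = (G (-1) * xi) * x := by rw [mul_assoc]
    _ = 0 := by rw [hz, zero_mul]
  -- G(-2) * xi = 1
  have hGm2 : G (-2) * xi = 1 := by
    have h := hGrec (-2)
    norm_num [hG0, hGm1] at h
    rw [← h]
  -- F(-1) = 0
  have hFm1 : F (-1) = 0 := by
    have h := hFrec (-1)
    norm_num [hF0, hF1] at h
    have hz : F (-1) * x = 0 := h
    calc F (-1) = F (-1) * (x * xi) := by rw [hx, mul_one]
    _ = (F (-1) * x) * xi := by rw [mul_assoc]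
    _ = 0 := by rw [hz, zero_mul]
  intro n
  induction n using Nat.strong_induction_on with
  | _ n ih =>
    match n with
    | 0 => simpa [hF0] using hGm2.symm
    | 1 =>
      simp only [Nat.cast_one, pow_one]
      rw [hFm1]
      norm_num [hGm1]
    | (m+2) =>
      have ihm := ih m (by omega)
      have ihm1 := ih (m+1) (by omega)
      -- downward recursion for F
      have h := hFrec (-(m:ℤ) - 2)
      have e1 : (-(m:ℤ) - 2 + 2) = -(m:ℤ) := by ring
      have e2 : (-(m:ℤ) - 2 + 1) = -((m:ℤ) + 1) := by ring
      rw [e1, e2] at h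
      have key : F (-(m:ℤ) - 2) = (F (-(m:ℤ)) - F (-((m:ℤ) + 1)) * y) * xi := by
        have hmul : F (-(m:ℤ) - 2) * x = F (-(m:ℤ)) - F (-((m:ℤ) + 1)) * y := by
          rw [h]; abel
        calc F (-(m:ℤ) - 2) = F (-(m:ℤ) - 2) * (x * xi) := by rw [hx, mul_one]
        _ = (F (-(m:ℤ) - 2) * x) * xi := by rw [mul_assoc]
        _ = _ := by rw [hmul]
      -- G recursion at m - 2
      have hg := hGrec ((m:ℤ) - 2)
      have g1 : ((m:ℤ) - 2 + 2) = (m:ℤ) := by ring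
      have g2 : ((m:ℤ) - 2 + 1) = (m:ℤ) - 1 := by ring
      rw [g1, g2] at hg
      have ecast : (-(((m:ℕ)+2 : ℕ) : ℤ)) = -(m:ℤ) - 2 := by push_cast; ring
      have ecast2 : ((((m:ℕ)+2 : ℕ) : ℤ) - 2) = (m:ℤ) := by push_cast; ring
      have ecast3 : (-(((m:ℕ)+1 : ℕ) : ℤ)) = -((m:ℤ) + 1) := by push_cast; ring
      have ecast4 : ((((m:ℕ)+1 : ℕ) : ℤ) - 2) = (m:ℤ) - 1 := by push_cast; ring
      rw [ecast3, ecast4] at ihm1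
      rw [ecast, ecast2, key, ihm, ihm1, hg]
      rw [pow_succ, pow_succ, pow_succ]
      noncomm_ring
end
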